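/- Let T = [0,1] with Lebesgue measure λ, let (Θ, 𝒜, π) be a probability space, let θ ↦ S_θ assign to each θ a measurable subset of [0,1] with (t,θ) ↦ 𝟙{t ∈ S_θ} jointly measurable, let α(t) = ∫_Θ 𝟙{t ∈ S_θ} dπ(θ), and let L_γ(S, S') = γ·λ(S \ S') + (1−γ)·λ(S' \ S) for γ ∈ [0,1]. Then for every measurable S ⊆ [0,1], ∫_Θ L_γ(S, S_θ) dπ(θ) ≥ ∫_0^1 min{γ(1 − α(t)), (1−γ)α(t)} dt. -/

import Mathlib

open MeasureTheory

/-- Lebesgue measure on `[0,1]`, as the restriction of `volume` to `Set.Icc 0 1`. -/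
noncomputable def lam : Measure ℝ := volume.restrict (Set.Icc (0:ℝ) 1)

/-- The loss `L_γ(S, S') = γ·λ(S \ S') + (1−γ)·λ(S' \ S)`. -/
noncomputable def Lloss (γ : ℝ) (S S' : Set ℝ) : ℝ :=
  γ * (lam (S \ S')).toReal + (1 - γ) * (lam (S' \ S)).toReal

/-- `α(t) = ∫_Θ 𝟙{t ∈ S_θ} dπ(θ)`. -/
noncomputable def alphaFn {Θ : Type*} [MeasurableSpace Θ] (π : Measure Θ)
    (S : Θ → Set ℝ) (t : ℝ) : ℝ :=
  ∫ θ, Set.indicator (S θ) (fun _ => (1:ℝ)) t ∂π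

/-! The loss is linear in the two set differences, so by Tonelli its posterior mean is the
integral over `t` of the pointwise risk `γ·π(t ∈ T \ S_θ) + (1−γ)·π(t ∈ S_θ \ T)`. At each `t`
this risk is `γ(1 − α(t))` if `t ∈ T` and `(1−γ)α(t)` otherwise, hence at least the minimum. -/

instance isFiniteMeasure_lam : IsFiniteMeasure lam := by
  rw [lam]
  infer_instance

section Sections

variable {X Y : Type*} [MeasurableSpace X] [MeasurableSpace Y] (μ : Measure X) (ν : Measure Y)
  [IsFiniteMeasure μ] [IsFiniteMeasure ν] {E : Set (X × Y)}

theorem integrable_measureReal_prodMk_right (hE : MeasurableSet E) :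
    Integrable (fun y => μ.real ((·, y) ⁻¹' E)) ν :=
  Measure.integrable_measure_prodMk_left (measurableSet_swap_iff.mpr hE) (measure_ne_top _ _)

theorem integral_measureReal_prodMk_right_eq (hE : MeasurableSet E) :
    ∫ y, μ.real ((·, y) ⁻¹' E) ∂ν = ∫ x, ν.real (Prod.mk x ⁻¹' E) ∂μ := by
  simp only [measureReal_def]
  rw [integral_toReal (measurable_measure_prodMk_right hE).aemeasurable
      (ae_of_all _ fun _ => measure_lt_top _ _),
    integral_toReal (measurable_measure_prodMk_left hE).aemeasurable
      (ae_of_all _ fun _ => measure_lt_top _ _),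
    ← Measure.prod_apply_symm hE, ← Measure.prod_apply hE]

end Sections

section Risk

variable {Θ : Type*} [MeasurableSpace Θ] (π : Measure Θ) (S : Θ → Set ℝ)

theorem alphaFn_eq_measureReal {t : ℝ} (ht : MeasurableSet {θ | t ∈ S θ}) :
    alphaFn π S t = π.real {θ | t ∈ S θ} := by
  rw [alphaFn, ← integral_indicator_one ht]
  rfl

theorem integrable_alphaFn (μ : Measure ℝ) [IsFiniteMeasure μ] [IsFiniteMeasure π]
    (hS : MeasurableSet {p : ℝ × Θ | p.1 ∈ S p.2}) : Integrable (alphaFn π S) μ :=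
  (Measure.integrable_measure_prodMk_left hS (measure_ne_top _ _)).congr
    (ae_of_all _ fun _ => (alphaFn_eq_measureReal π S (measurable_prodMk_left hS)).symm)

noncomputable def pointwiseRisk (γ : ℝ) (T : Set ℝ) (t : ℝ) : ℝ :=
  γ * π.real {θ | t ∈ T \ S θ} + (1 - γ) * π.real {θ | t ∈ S θ \ T}

variable {π S}

theorem integrable_pointwiseRisk (μ : Measure ℝ) [IsFiniteMeasure μ] [IsFiniteMeasure π]
    (hS : MeasurableSet {p : ℝ × Θ | p.1 ∈ S p.2}) (γ : ℝ) {T : Set ℝ} (hT : MeasurableSet T) :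
    Integrable (pointwiseRisk π S γ T) μ :=
  ((Measure.integrable_measure_prodMk_left ((hT.preimage measurable_fst).diff hS)
      (measure_ne_top _ _)).const_mul γ).add
    ((Measure.integrable_measure_prodMk_left (hS.diff (hT.preimage measurable_fst))
      (measure_ne_top _ _)).const_mul (1 - γ))

theorem integral_Lloss_eq_integral_pointwiseRisk [IsFiniteMeasure π]
    (hS : MeasurableSet {p : ℝ × Θ | p.1 ∈ S p.2}) (γ : ℝ) {T : Set ℝ} (hT : MeasurableSet T) :
    ∫ θ, Lloss γ T (S θ) ∂π = ∫ t, pointwiseRisk π S γ T t ∂lam := by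
  have hD₁ : MeasurableSet {p : ℝ × Θ | p.1 ∈ T \ S p.2} := (hT.preimage measurable_fst).diff hS
  have hD₂ : MeasurableSet {p : ℝ × Θ | p.1 ∈ S p.2 \ T} := hS.diff (hT.preimage measurable_fst)
  have hJ₁ : Integrable (fun θ => lam.real (T \ S θ)) π :=
    integrable_measureReal_prodMk_right lam π hD₁
  have hJ₂ : Integrable (fun θ => lam.real (S θ \ T)) π :=
    integrable_measureReal_prodMk_right lam π hD₂
  have hI₁ : Integrable (fun t => π.real {θ | t ∈ T \ S θ}) lam :=
    Measure.integrable_measure_prodMk_left hD₁ (measure_ne_top _ _)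
  have hI₂ : Integrable (fun t => π.real {θ | t ∈ S θ \ T}) lam :=
    Measure.integrable_measure_prodMk_left hD₂ (measure_ne_top _ _)
  calc ∫ θ, Lloss γ T (S θ) ∂π
      = γ * ∫ θ, lam.real (T \ S θ) ∂π + (1 - γ) * ∫ θ, lam.real (S θ \ T) ∂π := by
        rw [← integral_const_mul, ← integral_const_mul,
          ← integral_add (hJ₁.const_mul γ) (hJ₂.const_mul _)]
        rfl
    _ = γ * ∫ t, π.real {θ | t ∈ T \ S θ} ∂lam + (1 - γ) * ∫ t, π.real {θ | t ∈ S θ \ T} ∂lam := by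
        congr 2
        · exact integral_measureReal_prodMk_right_eq lam π hD₁
        · exact integral_measureReal_prodMk_right_eq lam π hD₂
    _ = ∫ t, pointwiseRisk π S γ T t ∂lam := by
        rw [← integral_const_mul, ← integral_const_mul,
          ← integral_add (hI₁.const_mul γ) (hI₂.const_mul _)]
        rfl

theorem min_le_pointwiseRisk [IsProbabilityMeasure π] (γ : ℝ) (T : Set ℝ) {t : ℝ}
    (ht : MeasurableSet {θ | t ∈ S θ}) :
    min (γ * (1 - alphaFn π S t)) ((1 - γ) * alphaFn π S t) ≤ pointwiseRisk π S γ T t := by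
  rw [pointwiseRisk, alphaFn_eq_measureReal π S ht]
  by_cases hT : t ∈ T
  · have h₁ : {θ | t ∈ T \ S θ} = {θ | t ∈ S θ}ᶜ := by ext; simp [hT]
    have h₂ : {θ | t ∈ S θ \ T} = ∅ := by ext; simp [hT]
    rw [h₁, h₂, probReal_compl_eq_one_sub ht, measureReal_empty, mul_zero, add_zero]
    exact min_le_left _ _
  · have h₁ : {θ | t ∈ T \ S θ} = ∅ := by ext; simp [hT]
    have h₂ : {θ | t ∈ S θ \ T} = {θ | t ∈ S θ} := by ext; simp [hT]
    rw [h₁, h₂, measureReal_empty, mul_zero, zero_add]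
    exact min_le_right _ _

end Risk

theorem stmt_4_general {Θ : Type*} [MeasurableSpace Θ] (π : Measure Θ) [IsProbabilityMeasure π]
    (S : Θ → Set ℝ)
    (hjoint : MeasurableSet {p : ℝ × Θ | p.1 ∈ S p.2})
    (γ : ℝ) :
    ∀ T : Set ℝ, MeasurableSet T → T ⊆ Set.Icc 0 1 →
      ∫ t, min (γ * (1 - alphaFn π S t)) ((1 - γ) * alphaFn π S t) ∂lam
        ≤ ∫ θ, Lloss γ T (S θ) ∂π := by
  intro T hT _
  have hα := integrable_alphaFn π S lam hjoint
  rw [integral_Lloss_eq_integral_pointwiseRisk hjoint γ hT]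
  exact integral_mono ((((integrable_const 1).sub hα).const_mul γ).inf (hα.const_mul (1 - γ)))
    (integrable_pointwiseRisk lam hjoint γ hT)
    fun t => min_le_pointwiseRisk γ T (measurable_prodMk_left hjoint)

theorem stmt_4 {Θ : Type*} [MeasurableSpace Θ] (π : Measure Θ) [IsProbabilityMeasure π]
    (S : Θ → Set ℝ) (hsub : ∀ θ, S θ ⊆ Set.Icc 0 1) (hmeas : ∀ θ, MeasurableSet (S θ))
    (hjoint : MeasurableSet {p : ℝ × Θ | p.1 ∈ S p.2})
    (γ : ℝ) (hγ : γ ∈ Set.Icc (0:ℝ) 1) :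
    ∀ T : Set ℝ, MeasurableSet T → T ⊆ Set.Icc 0 1 →
      ∫ t, min (γ * (1 - alphaFn π S t)) ((1 - γ) * alphaFn π S t) ∂lam
        ≤ ∫ θ, Lloss γ T (S θ) ∂π :=
  stmt_4_general π S hjoint γ
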